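/- Let F(x) = x^7 + f_5 x^5 + f_4 x^4 + f_3 x^3 + f_2 x^2 + f_1 x be a polynomial over a finite field F_q, let α, β, α₁, β₁ ∈ F_q^* and γ, δ, γ₁, δ₁ ∈ F_q, and set g(x) = α·F(βx), h(x) = α₁·F(β₁x). If g(x + γ) + δ = h(x + γ₁) + δ₁ as polynomial functions agreeing for all x ∈ F_q, where q > 7 and the characteristic of F_q is not 2 or 7, then γ = γ₁ and δ = δ₁. -/
import Mathlib

open Polynomial

/-- Uniqueness of the translation parameters: with `F(x) = x^7 + f₅x^5 + f₄x^4 + f₃x^3 +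
    f₂x^2 + f₁x` over a finite field of order `q > 7` and characteristic `≠ 2, 7`, if
    `α F(β(x+γ)) + δ = α₁ F(β₁(x+γ₁)) + δ₁` for all `x`, then `γ = γ₁` and `δ = δ₁`. -/
theorem stmt_3 {K : Type*} [Field K] [Fintype K]
    (hq : 7 < Fintype.card K) (hchar2 : ringChar K ≠ 2) (hchar7 : ringChar K ≠ 7)
    (f₁ f₂ f₃ f₄ f₅ : K)
    (F : K → K)
    (hF : F = fun x => x ^ 7 + f₅ * x ^ 5 + f₄ * x ^ 4 + f₃ * x ^ 3 + f₂ * x ^ 2 + f₁ * x)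
    (α β α₁ β₁ : K) (hα : α ≠ 0) (hβ : β ≠ 0) (hα₁ : α₁ ≠ 0) (hβ₁ : β₁ ≠ 0)
    (g h : K → K) (hg : g = fun x => α * F (β * x)) (hh : h = fun x => α₁ * F (β₁ * x))
    (γ δ γ₁ δ₁ : K)
    (heq : ∀ x : K, g (x + γ) + δ = h (x + γ₁) + δ₁) :
    γ = γ₁ ∧ δ = δ₁ := by
  have h7 : (7 : K) ≠ 0 := by
    intro h0
    have hd : ringChar K ∣ 7 := by
      have := (CharP.cast_eq_zero_iff K (ringChar K) 7).mp (by exact_mod_cast h0)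
      exact this
    rcases (by norm_num : Nat.Prime 7).eq_one_or_self_of_dvd (ringChar K) hd with h1 | h1
    · exact CharP.ringChar_ne_one h1
    · exact hchar7 h1
  -- polynomial encodings
  set P : K[X] := C α * (C (β^7) * (X + C γ)^7 + C (f₅ * β^5) * (X + C γ)^5 +
      C (f₄ * β^4) * (X + C γ)^4 + C (f₃ * β^3) * (X + C γ)^3 +
      C (f₂ * β^2) * (X + C γ)^2 + C (f₁ * β) * (X + C γ)) + C δ with hP
  set Q : K[X] := C α₁ * (C (β₁^7) * (X + C γ₁)^7 + C (f₅ * β₁^5) * (X + C γ₁)^5 +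
      C (f₄ * β₁^4) * (X + C γ₁)^4 + C (f₃ * β₁^3) * (X + C γ₁)^3 +
      C (f₂ * β₁^2) * (X + C γ₁)^2 + C (f₁ * β₁) * (X + C γ₁)) + C δ₁ with hQ
  have hPQ : P = Q := by
    have hz : P - Q = 0 := by
      apply eq_zero_of_natDegree_lt_card_of_eval_eq_zero (f := (id : K → K))
        _ Function.injective_id
      · intro x
        have hx := heq x
        simp only [hg, hh, hF] at hx
        simp only [hP, hQ, eval_sub, eval_add, eval_mul, eval_pow, eval_C, eval_X, id]
        ring_nf
        ring_nf at hx
        linear_combination hx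
      · have : (P - Q).natDegree ≤ 7 :=
          le_trans (natDegree_sub_le P Q) (max_le (by rw [hP]; compute_degree) (by rw [hQ]; compute_degree))
        omega
    have := sub_eq_zero.mp hz
    exact this
  have ch1 : Nat.choose 1 6 = 0 := by decide
  have ch2 : Nat.choose 2 6 = 0 := by decide
  have ch3 : Nat.choose 3 6 = 0 := by decide
  have ch4 : Nat.choose 4 6 = 0 := by decide
  have ch5 : Nat.choose 5 6 = 0 := by decide
  have ch2' : Nat.choose 2 7 = 0 := by decide
  have ch3' : Nat.choose 3 7 = 0 := by decide
  have ch4' : Nat.choose 4 7 = 0 := by decide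
  have ch5' : Nat.choose 5 7 = 0 := by decide
  have hc7 : α * β^7 = α₁ * β₁^7 := by
    have := congrArg (fun p => Polynomial.coeff p 7) hPQ
    simp only [hP, hQ, coeff_add, coeff_C_mul, coeff_X_add_C_pow, coeff_C, coeff_X] at this
    norm_num [ch2', ch3', ch4', ch5'] at this
    linear_combination this
  have hc6 : α * β^7 * (7 * γ) = α₁ * β₁^7 * (7 * γ₁) := by
    have := congrArg (fun p => Polynomial.coeff p 6) hPQ
    simp only [hP, hQ, coeff_add, coeff_C_mul, coeff_X_add_C_pow, coeff_C, coeff_X] at this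
    norm_num [ch1, ch2, ch3, ch4, ch5] at this
    linear_combination this
  have hA : α * β^7 ≠ 0 := mul_ne_zero hα (pow_ne_zero _ hβ)
  have hγ : γ = γ₁ := by
    rw [← hc7] at hc6
    have := mul_left_cancel₀ hA hc6
    exact mul_left_cancel₀ h7 this
  refine ⟨hγ, ?_⟩
  have := heq (-γ)
  rw [hγ] at this
  simp [hg, hh, hF] at this
  exact this
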